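/- Let γ ∈ (0,1), let P be an S×S row-stochastic matrix with rows P_s, let ρ ∈ ℝ^S be a probability row vector, let d := (1−γ) ∑_{t=0}^{∞} γ^t ρP^t, and set ρ̃ := (d − (1−γ)ρ)/γ. Then for all W, V ∈ ℝ^S with 0 ≤ W ≤ V entrywise, ∑_s d_s Var_{P_s}(V−W) ≤ ‖V−W‖_∞ · ⟨ρ̃, V−W⟩. -/

import Mathlib

open Matrix

/-! Put `U := V - W`, so `0 ≤ U ≤ ‖U‖_∞`. Each variance is at most `∑ P_s U² ≤ ‖U‖_∞ ⟨P_s, U⟩`,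
hence the left side is at most `‖U‖_∞ ⟨dP, U⟩`. Splitting off the `t = 0` term of the geometric
series defining `d` gives `d = (1 - γ)ρ + γ dP`, i.e. `dP = ρ̃`. -/

noncomputable def varVec {S : ℕ} (p U : Fin S → ℝ) : ℝ :=
  (∑ s, p s * U s ^ 2) - (∑ s, p s * U s) ^ 2

open Finset

namespace Matrix

variable {n : Type*} [Fintype n] [DecidableEq n] {M : Matrix n n ℝ} {x : n → ℝ}

lemma vecMul_dotProduct_one_of_mem_rowStochastic (hM : M ∈ rowStochastic ℝ n) :
    (x ᵥ* M) ⬝ᵥ 1 = x ⬝ᵥ 1 := by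
  rw [← dotProduct_mulVec, hM.2]

lemma vecMul_apply_le_dotProduct_one_of_mem_rowStochastic (hM : M ∈ rowStochastic ℝ n)
    (hx : ∀ i, 0 ≤ x i) (j : n) : (x ᵥ* M) j ≤ x ⬝ᵥ 1 := by
  rw [← vecMul_dotProduct_one_of_mem_rowStochastic hM, dotProduct_one]
  exact single_le_sum (fun k _ => nonneg_vecMul_of_mem_rowStochastic hM hx k) (mem_univ j)

lemma summable_geometric_mul_vecMul_pow (hM : M ∈ rowStochastic ℝ n) (hx : ∀ i, 0 ≤ x i)
    {γ : ℝ} (hγ0 : 0 ≤ γ) (hγ1 : γ < 1) (j : n) :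
    Summable fun t : ℕ => γ ^ t * (x ᵥ* M ^ t) j :=
  Summable.of_nonneg_of_le
    (fun t => mul_nonneg (pow_nonneg hγ0 t)
      (nonneg_vecMul_of_mem_rowStochastic (pow_mem hM t) hx j))
    (fun t => mul_le_mul_of_nonneg_left
      (vecMul_apply_le_dotProduct_one_of_mem_rowStochastic (pow_mem hM t) hx j)
      (pow_nonneg hγ0 t))
    ((summable_geometric_of_lt_one hγ0 hγ1).mul_right _)

end Matrix

section Occupancy

variable {n : Type*} [Fintype n] [DecidableEq n] (γ : ℝ) (P : Matrix n n ℝ) (ρ : n → ℝ)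

noncomputable def discountedOccupancy : n → ℝ :=
  fun s => (1 - γ) * ∑' t : ℕ, γ ^ t * (ρ ᵥ* (P ^ t)) s

variable {γ P ρ}

lemma discountedOccupancy_eq (hsum : ∀ s, Summable fun t : ℕ => γ ^ t * (ρ ᵥ* P ^ t) s) :
    discountedOccupancy γ P ρ = (1 - γ) • ρ + γ • (discountedOccupancy γ P ρ ᵥ* P) := by
  have hD : Summable fun t : ℕ => γ ^ t • (ρ ᵥ* P ^ t) := Pi.summable.2 hsum
  set D := ∑' t : ℕ, γ ^ t • (ρ ᵥ* P ^ t)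
  have hdD : discountedOccupancy γ P ρ = (1 - γ) • D := by
    ext s
    simp only [discountedOccupancy, D, Pi.smul_apply, tsum_apply hD, smul_eq_mul]
  have hvecMul : D ᵥ* P = ∑' t : ℕ, γ ^ t • (ρ ᵥ* P ^ (t + 1)) := by
    rw [← vecMulLinear_apply, hD.map_tsum _ (LinearMap.continuous_of_finiteDimensional _)]
    simp only [map_smul, vecMulLinear_apply, vecMul_vecMul, pow_succ]
  have hshift : D = ρ + γ • (D ᵥ* P) :=
    calc D = γ ^ 0 • (ρ ᵥ* P ^ 0) + ∑' t : ℕ, γ ^ (t + 1) • (ρ ᵥ* P ^ (t + 1)) :=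
          hD.tsum_eq_zero_add
      _ = ρ + γ • (D ᵥ* P) := by
          rw [hvecMul, ← tsum_const_smul'']
          simp only [pow_zero, vecMul_one, one_smul, pow_succ', mul_smul]
  rw [hdD, smul_vecMul]
  conv_lhs => rw [hshift]
  module

lemma discountedOccupancy_nonneg (hP : P ∈ rowStochastic ℝ n) (hρ : ∀ s, 0 ≤ ρ s)
    (hγ0 : 0 ≤ γ) (hγ1 : γ < 1) (s : n) : 0 ≤ discountedOccupancy γ P ρ s :=
  mul_nonneg (sub_nonneg.2 hγ1.le) <| tsum_nonneg fun t =>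
    mul_nonneg (pow_nonneg hγ0 t) (nonneg_vecMul_of_mem_rowStochastic (pow_mem hP t) hρ s)

lemma discountedOccupancy_sub_div_eq_vecMul (hγ : γ ≠ 0)
    (hsum : ∀ s, Summable fun t : ℕ => γ ^ t * (ρ ᵥ* P ^ t) s) (s : n) :
    (discountedOccupancy γ P ρ s - (1 - γ) * ρ s) / γ = (discountedOccupancy γ P ρ ᵥ* P) s := by
  rw [div_eq_iff hγ, congrFun (discountedOccupancy_eq hsum) s]
  simp only [Pi.add_apply, Pi.smul_apply, smul_eq_mul]
  ring

end Occupancy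

lemma varVec_le_sum_mul_sq {S : ℕ} (p U : Fin S → ℝ) : varVec p U ≤ ∑ s, p s * U s ^ 2 :=
  sub_le_self _ (sq_nonneg _)

lemma varVec_le_mul_dotProduct {S : ℕ} {p U : Fin S → ℝ} {M : ℝ} (hp : ∀ s, 0 ≤ p s)
    (hU0 : ∀ s, 0 ≤ U s) (hUM : ∀ s, U s ≤ M) : varVec p U ≤ M * (p ⬝ᵥ U) :=
  calc varVec p U ≤ ∑ s, p s * U s ^ 2 := varVec_le_sum_mul_sq p U
    _ ≤ ∑ s, p s * (M * U s) := by
        gcongr with s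
        · exact hp s
        · rw [sq]; exact mul_le_mul_of_nonneg_right (hUM s) (hU0 s)
    _ = M * (p ⬝ᵥ U) := by
        rw [dotProduct, mul_sum]
        exact sum_congr rfl fun s _ => by ring

lemma sum_mul_varVec_le {S : ℕ} {d U : Fin S → ℝ} {P : Matrix (Fin S) (Fin S) ℝ} {M : ℝ}
    (hd : ∀ s, 0 ≤ d s) (hP : ∀ s s', 0 ≤ P s s') (hU0 : ∀ s, 0 ≤ U s) (hUM : ∀ s, U s ≤ M) :
    ∑ s, d s * varVec (P s) U ≤ M * ((d ᵥ* P) ⬝ᵥ U) :=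
  calc ∑ s, d s * varVec (P s) U ≤ ∑ s, d s * (M * (P *ᵥ U) s) := by
        gcongr with s
        · exact hd s
        · exact varVec_le_mul_dotProduct (hP s) hU0 hUM
    _ = M * ((d ᵥ* P) ⬝ᵥ U) := by
        rw [← dotProduct_mulVec, dotProduct, mul_sum]
        exact sum_congr rfl fun s _ => by ring

theorem stmt15_general (S : ℕ) (γ : ℝ) (hγ0 : 0 < γ) (hγ1 : γ < 1)
    (P : Matrix (Fin S) (Fin S) ℝ)
    (hP0 : ∀ s s', 0 ≤ P s s') (hP1 : ∀ s, ∑ s', P s s' = 1)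
    (ρ : Fin S → ℝ) (hρ0 : ∀ s, 0 ≤ ρ s) :
    letI d : Fin S → ℝ := fun s => (1 - γ) * ∑' t : ℕ, γ ^ t * (ρ ᵥ* (P ^ t)) s
    letI ρt : Fin S → ℝ := fun s => (d s - (1 - γ) * ρ s) / γ
    ∀ W V : Fin S → ℝ, (∀ s, 0 ≤ W s) → (∀ s, W s ≤ V s) →
      (∑ s, d s * varVec (P s) (V - W)) ≤
        (⨆ s, |V s - W s|) * ∑ s, ρt s * (V s - W s) := by
  intro W V _ hWV
  have hP : P ∈ rowStochastic ℝ (Fin S) := mem_rowStochastic_iff_sum.2 ⟨hP0, hP1⟩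
  have hsum := summable_geometric_mul_vecMul_pow hP hρ0 hγ0.le hγ1
  change ∑ s, discountedOccupancy γ P ρ s * varVec (P s) (V - W) ≤
    (⨆ s, |V s - W s|) * ∑ s, (discountedOccupancy γ P ρ s - (1 - γ) * ρ s) / γ * (V s - W s)
  simp only [discountedOccupancy_sub_div_eq_vecMul hγ0.ne' hsum]
  exact sum_mul_varVec_le (discountedOccupancy_nonneg hP hρ0 hγ0.le hγ1) hP0
    (fun s => sub_nonneg.2 (hWV s)) fun s =>
      (le_abs_self (V s - W s)).trans (le_ciSup (Finite.bddAbove_range fun s => |V s - W s|) s)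

/-- Let `γ ∈ (0,1)`, `P` an `S×S` row-stochastic matrix with rows `P_s`, `ρ` a probability row
vector, `d := (1−γ) ∑_{t=0}^∞ γ^t ρP^t`, and `ρ̃ := (d − (1−γ)ρ)/γ`.  Then for all
`0 ≤ W ≤ V` entrywise, `∑_s d_s Var_{P_s}(V−W) ≤ ‖V−W‖_∞ · ⟨ρ̃, V−W⟩`. -/
theorem stmt15 (S : ℕ) (γ : ℝ) (hγ0 : 0 < γ) (hγ1 : γ < 1)
    (P : Matrix (Fin S) (Fin S) ℝ)
    (hP0 : ∀ s s', 0 ≤ P s s') (hP1 : ∀ s, ∑ s', P s s' = 1)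
    (ρ : Fin S → ℝ) (hρ0 : ∀ s, 0 ≤ ρ s) (hρ1 : ∑ s, ρ s = 1) :
    letI d : Fin S → ℝ := fun s => (1 - γ) * ∑' t : ℕ, γ ^ t * (ρ ᵥ* (P ^ t)) s
    letI ρt : Fin S → ℝ := fun s => (d s - (1 - γ) * ρ s) / γ
    ∀ W V : Fin S → ℝ, (∀ s, 0 ≤ W s) → (∀ s, W s ≤ V s) →
      (∑ s, d s * varVec (P s) (V - W)) ≤
        (⨆ s, |V s - W s|) * ∑ s, ρt s * (V s - W s) :=
  stmt15_general S γ hγ0 hγ1 P hP0 hP1 ρ hρ0
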